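/- The 6×6 matrix S with rows (1,−1,1,r₁,r₂,r₃), (−1,1,−1,−r₂,−r₃,−r₁), (1,−1,1,r₃,r₁,r₂), (r₁,−r₂,r₃,1,1,1), (r₂,−r₃,r₁,1,1,1), (r₃,−r₁,r₂,1,1,1) is symmetric and satisfies S · Sᵀ = 9 · I₆. -/

import Mathlib

/-! The entries of `S * Sᵀ` are `3` plus quadratic expressions in `r₁, r₂, r₃` that only involve
the elementary symmetric functions `e₁ = r₁ + r₂ + r₃` and `e₂ = r₁r₂ + r₂r₃ + r₃r₁`, so the
identity holds for every triple with `e₁ = 0` and `e₂ = -3`. For the given triple `e₁ = 0` is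
formal, and `e₂ = -3` follows from `α` being a primitive 18th root of unity, i.e. a root of
`Φ₁₈ = X⁶ - X³ + 1`. -/

/-- `α = e^{iπ/9}`. -/
noncomputable def α : ℂ := Complex.exp (Real.pi * Complex.I / 9)

noncomputable def r₁ : ℂ := -α - α ^ 2 + α ^ 5
noncomputable def r₂ : ℂ := α + α ^ 2 - α ^ 4
noncomputable def r₃ : ℂ := α ^ 4 - α ^ 5

/-- The 6×6 matrix with rows `(1,−1,1,r₁,r₂,r₃)`, `(−1,1,−1,−r₂,−r₃,−r₁)`,
`(1,−1,1,r₃,r₁,r₂)`, `(r₁,−r₂,r₃,1,1,1)`, `(r₂,−r₃,r₁,1,1,1)`, `(r₃,−r₁,r₂,1,1,1)`. -/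
noncomputable def S : Matrix (Fin 6) (Fin 6) ℂ :=
  !![1, -1, 1, r₁, r₂, r₃;
     -1, 1, -1, -r₂, -r₃, -r₁;
     1, -1, 1, r₃, r₁, r₂;
     r₁, -r₂, r₃, 1, 1, 1;
     r₂, -r₃, r₁, 1, 1, 1;
     r₃, -r₁, r₂, 1, 1, 1]

open Matrix

def sMatrixOf {R : Type*} [One R] [Neg R] (a b c : R) : Matrix (Fin 6) (Fin 6) R :=
  !![1, -1, 1, a, b, c;
     -1, 1, -1, -b, -c, -a;
     1, -1, 1, c, a, b;
     a, -b, c, 1, 1, 1;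
     b, -c, a, 1, 1, 1;
     c, -a, b, 1, 1, 1]

theorem sMatrixOf_isSymm {R : Type*} [One R] [Neg R] (a b c : R) :
    (sMatrixOf a b c).IsSymm := by
  ext i j
  fin_cases i <;> fin_cases j <;> rfl

theorem sMatrixOf_mul_transpose {R : Type*} [CommRing R] {a b c : R} (h₁ : a + b + c = 0)
    (h₂ : a * b + b * c + c * a = -3) :
    sMatrixOf a b c * (sMatrixOf a b c)ᵀ = (9 : R) • 1 := by
  ext i j
  fin_cases i <;> fin_cases j <;> simp [sMatrixOf, mul_apply, Fin.sum_univ_six] <;> grind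

theorem isPrimitiveRoot_α : IsPrimitiveRoot α 18 := by
  convert Complex.isPrimitiveRoot_exp 18 (by norm_num) using 2
  rw [α]
  push_cast
  ring_nf

theorem α_pow_six : α ^ 6 = α ^ 3 - 1 := by
  have h₉ : α ^ 9 = -1 :=
    (isPrimitiveRoot_α.pow_of_dvd (by norm_num) (by norm_num : 9 ∣ 18)).eq_neg_one_of_two_right
  have h₃ : α ^ 3 + 1 ≠ 0 := fun h ↦ by
    have h₆ : ¬ α ^ 6 = 1 := by simp [isPrimitiveRoot_α.pow_eq_one_iff_dvd]
    exact h₆ (by linear_combination (α ^ 3 - 1) * h)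
  exact mul_left_cancel₀ h₃ (by linear_combination h₉)

theorem r₁_add_r₂_add_r₃ : r₁ + r₂ + r₃ = 0 := by
  unfold r₁ r₂ r₃
  ring

theorem r₁_mul_r₂_add_r₂_mul_r₃_add_r₃_mul_r₁ : r₁ * r₂ + r₂ * r₃ + r₃ * r₁ = -3 := by
  unfold r₁ r₂ r₃
  linear_combination (-α ^ 4 + α ^ 3 - α ^ 2 + 3) * α_pow_six

theorem S_eq_sMatrixOf : S = sMatrixOf r₁ r₂ r₃ := rfl

theorem S_symm_orthogonal :
    S.IsSymm ∧ S * S.transpose = (9 : ℂ) • (1 : Matrix (Fin 6) (Fin 6) ℂ) := by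
  rw [S_eq_sMatrixOf]
  exact ⟨sMatrixOf_isSymm r₁ r₂ r₃,
    sMatrixOf_mul_transpose r₁_add_r₂_add_r₃ r₁_mul_r₂_add_r₂_mul_r₃_add_r₃_mul_r₁⟩
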